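/- arXiv:1612.02416 — 4 statements merged into one kernel-verified Lean document; each statement's English description precedes it below -/
import Mathlib

section
/- Let p ∈ ℝ^I be strictly positive with Σᵢ pᵢ = 1, D a K×I full-row-rank matrix with D𝟙 = 0, Σ = Δ[p] − p p′, H = (𝟙, Δ[p⁻¹]D′), and M = I − Δ[p] H (H′Δ[p]H)⁻¹ H′. Then M = (Σ − D′(D Δ[p⁻¹] D′)⁻¹ D) · Δ[p⁻¹]. -/
/-!
With `P = Δ[p]`, the columns `𝟙` and `Δ[p⁻¹]D′` of `H` are `P`-orthogonal because `D𝟙 = 0`, so the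
`P`-Gram matrix `H′PH` is block diagonal with blocks `𝟙′P𝟙 = Σᵢ pᵢ = 1` and `DΔ[p⁻¹]D′`, and the
weighted projection `PH(H′PH)⁻¹H′` splits as `p𝟙′ + D′(DΔ[p⁻¹]D′)⁻¹DΔ[p⁻¹]`.
Since `I = Δ[p]Δ[p⁻¹]` and `p𝟙′ = pp′Δ[p⁻¹]`, the formula follows.
-/

open Matrix

namespace Matrix

variable {R l m n : Type*}

theorem diagonal_mul_diagonal_inv [DivisionRing R] [Fintype n] [DecidableEq n] {d : n → R}
    (hd : ∀ i, d i ≠ 0) : diagonal d * diagonal (fun i => (d i)⁻¹) = 1 := by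
  simp [diagonal_mul_diagonal, hd]

theorem diagonal_inv_mul_diagonal [DivisionRing R] [Fintype n] [DecidableEq n] {d : n → R}
    (hd : ∀ i, d i ≠ 0) : diagonal (fun i => (d i)⁻¹) * diagonal d = 1 := by
  simp [diagonal_mul_diagonal, hd]

theorem linearIndependent_row_of_rank_eq_card [Field R] [Fintype m] [Fintype n] {A : Matrix m n R}
    (h : A.rank = Fintype.card m) : LinearIndependent R A.row := by
  rw [linearIndependent_iff_card_eq_finrank_span, Set.finrank, ← rank_eq_finrank_span_row, h]

theorem posDef_mul_diagonal_mul_transpose [Fintype m] [Fintype n] [DecidableEq n]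
    {A : Matrix m n ℝ} (hA : A.rank = Fintype.card m) {w : n → ℝ} (hw : ∀ i, 0 < w i) :
    (A * diagonal w * Aᵀ).PosDef := by
  have hinj : Function.Injective A.vecMul :=
    vecMul_injective_iff.mpr (linearIndependent_row_of_rank_eq_card hA)
  simpa [conjTranspose_eq_transpose_of_trivial] using
    (PosDef.diagonal hw).mul_mul_conjTranspose_same hinj

theorem mul_replicateCol_eq_zero [CommSemiring R] [Fintype n] {A : Matrix m n R} {v : n → R}
    (h : A *ᵥ v = 0) : A * replicateCol l v = 0 := by
  rw [← replicateCol_mulVec, h, replicateCol_zero]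

theorem transpose_replicateCol_one_mul_diagonal_mul_replicateCol_one [CommSemiring R] [Fintype n]
    [DecidableEq n] (d : n → R) :
    (replicateCol l fun _ : n => (1 : R))ᵀ * diagonal d * replicateCol l (fun _ : n => (1 : R)) =
      of fun _ _ => ∑ i, d i := by
  ext
  simp [mul_apply, diagonal_apply]

theorem diagonal_mul_replicateCol_one_mul_transpose [CommSemiring R] [Fintype n] [DecidableEq n]
    (d : n → R) :
    diagonal d * replicateCol Unit (fun _ : n => (1 : R)) *
      (replicateCol Unit fun _ : n => (1 : R))ᵀ = vecMulVec d fun _ => 1 := by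
  ext
  simp [mul_apply, vecMulVec_apply, diagonal_apply]

theorem vecMulVec_mul_diagonal_inv [Field R] [Fintype n] [DecidableEq n] (v : m → R) {d : n → R}
    (hd : ∀ i, d i ≠ 0) : vecMulVec v d * diagonal (fun i => (d i)⁻¹) = vecMulVec v fun _ => 1 := by
  ext
  simp [vecMulVec_apply, hd]

theorem mul_fromCols_mul_inv_mul_transpose_of_orthogonal [CommRing R] [Fintype l] [DecidableEq l]
    [Fintype m] [Fintype n] [DecidableEq n] {P : Matrix m m R} (hP : Pᵀ = P)
    {E : Matrix m l R} {F : Matrix m n R} (hEF : Eᵀ * P * F = 0)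
    (hE : IsUnit (Eᵀ * P * E)) (hF : IsUnit (Fᵀ * P * F)) :
    P * fromCols E F * ((fromCols E F)ᵀ * P * fromCols E F)⁻¹ * (fromCols E F)ᵀ =
      P * E * (Eᵀ * P * E)⁻¹ * Eᵀ + P * F * (Fᵀ * P * F)⁻¹ * Fᵀ := by
  have hFE : Fᵀ * P * E = 0 := by
    rw [← transpose_transpose (Fᵀ * P * E)]
    simp only [transpose_mul, transpose_transpose, hP, ← Matrix.mul_assoc, hEF, transpose_zero]
  have hGram : (fromCols E F)ᵀ * P * fromCols E F = fromBlocks (Eᵀ * P * E) 0 0 (Fᵀ * P * F) := by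
    rw [transpose_fromCols, fromRows_mul, fromRows_mul_fromCols, hEF, hFE]
  rw [hGram, inv_fromBlocks_zero₂₁_of_isUnit_iff _ _ _ (iff_of_true hE hF), mul_fromCols,
    transpose_fromCols, fromCols_mul_fromBlocks, fromCols_mul_fromRows]
  simp [Matrix.mul_assoc]

end Matrix

/-- If `D𝟙 = 0`, `Σ = Δ[p] − pp′`, `H = (𝟙, Δ[p⁻¹]D′)`, and
`M = I − Δ[p] H (H′Δ[p]H)⁻¹ H′`, then `M = (Σ − D′(DΔ[p⁻¹]D′)⁻¹D) Δ[p⁻¹]`. -/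
theorem M_eq_Sigma_formula
    {I K : ℕ} (p : Fin I → ℝ) (hp : ∀ i, 0 < p i) (hsum : ∑ i, p i = 1)
    (D : Matrix (Fin K) (Fin I) ℝ) (hD : D.rank = K)
    (hD1 : D *ᵥ (fun _ => (1 : ℝ)) = 0)
    (H : Matrix (Fin I) (Unit ⊕ Fin K) ℝ)
    (hH : H = fromCols (Matrix.of fun _ (_ : Unit) => (1 : ℝ))
      (diagonal (fun i => (p i)⁻¹) * Dᵀ))
    (Sig : Matrix (Fin I) (Fin I) ℝ) (hSig : Sig = diagonal p - vecMulVec p p)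
    (M : Matrix (Fin I) (Fin I) ℝ)
    (hM : M = 1 - diagonal p * H * (Hᵀ * diagonal p * H)⁻¹ * Hᵀ) :
    M = (Sig - Dᵀ * (D * diagonal (fun i => (p i)⁻¹) * Dᵀ)⁻¹ * D) *
      diagonal (fun i => (p i)⁻¹) := by
  have hp0 : ∀ i, p i ≠ 0 := fun i => (hp i).ne'
  set P := diagonal p
  set Q := diagonal fun i => (p i)⁻¹
  set E := replicateCol Unit fun _ : Fin I => (1 : ℝ)
  set F := Q * Dᵀ
  replace hH : H = fromCols E F := hH
  have hPQ : P * Q = 1 := diagonal_mul_diagonal_inv hp0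
  have hFt : Fᵀ = D * Q := by rw [transpose_mul, transpose_transpose, diagonal_transpose]
  have hEE : Eᵀ * P * E = 1 := by
    rw [transpose_replicateCol_one_mul_diagonal_mul_replicateCol_one, hsum]
    ext
    rfl
  have hEF : Eᵀ * P * F = 0 := by
    rw [Matrix.mul_assoc, ← Matrix.mul_assoc P, hPQ, Matrix.one_mul, ← transpose_mul,
      mul_replicateCol_eq_zero hD1, transpose_zero]
  have hFF : Fᵀ * P * F = D * Q * Dᵀ := by
    rw [hFt, Matrix.mul_assoc D, diagonal_inv_mul_diagonal hp0, Matrix.mul_one, Matrix.mul_assoc]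
  have hA : (D * Q * Dᵀ).PosDef :=
    posDef_mul_diagonal_mul_transpose (by simpa using hD) fun i => inv_pos.mpr (hp i)
  have hproj : P * H * (Hᵀ * P * H)⁻¹ * Hᵀ = vecMulVec p p * Q + Dᵀ * (D * Q * Dᵀ)⁻¹ * D * Q := by
    rw [hH, mul_fromCols_mul_inv_mul_transpose_of_orthogonal (diagonal_transpose p) hEF
      (by rw [hEE]; exact isUnit_one) (by rw [hFF]; exact hA.isUnit), hEE, hFF, inv_one,
      Matrix.mul_one, diagonal_mul_replicateCol_one_mul_transpose,
      ← vecMulVec_mul_diagonal_inv p hp0, hFt, ← Matrix.mul_assoc P, hPQ, Matrix.one_mul,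
      Matrix.mul_assoc (Dᵀ * _) D Q]
  rw [hM, hproj, hSig, sub_mul, sub_mul, hPQ]
  abel
end

section
/- Let p ∈ ℝ^I be strictly positive with Σᵢ pᵢ = 1, D a K×I full-row-rank matrix with D𝟙 = 0, and Σ = Δ[p] − p p′. Set M = (Σ − D′(D Δ[p⁻¹] D′)⁻¹ D) Δ[p⁻¹]. Then M Σ M′ = Σ − D′(D Δ[p⁻¹] D′)⁻¹ D. -/
/-!
Write `W = Δ[p⁻¹]` and `A = D′(D W D′)⁻¹ D`, so that `M = (Σ − A) W` and, both being symmetric,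
`M Σ M′ = (Σ − A) W Σ W (Σ − A)`. Since `Σ W = 1 − p 𝟙′`, left multiplication by `Σ W` fixes
every matrix `X` with `𝟙′ X = 0`; as `𝟙′ Σ = 0` and `𝟙′ D′ = 0` this gives `Σ W Σ = Σ`,
`Σ W A = A` and, transposing, `A W Σ = A`. Together with `A W A = A` (from `B⁻¹ B B⁻¹ = B⁻¹` for
`B = D W D′`) the four terms of the expansion collapse to `Σ − A`.
-/

open Matrix

section ReflexiveProduct

variable {R : Type*} [Ring R]

theorem sub_mul_mul_mul_mul_sub_eq_sub {s w a : R} (hs : s * w * s = s) (hsa : s * w * a = a)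
    (has : a * w * s = a) (ha : a * w * a = a) :
    (s - a) * w * s * (w * (s - a)) = s - a := by
  have expand : (s - a) * w * s * (w * (s - a)) =
      s * w * s * w * s - s * w * s * w * a - (a * w * s * w * s - a * w * s * w * a) := by
    noncomm_ring
  rw [expand, hs, hs, hsa, has, has, ha]
  abel

end ReflexiveProduct

namespace Matrix

variable {m n o R : Type*}

theorem nonsing_inv_mul_mul_nonsing_inv [Fintype n] [DecidableEq n] [CommRing R]
    (B : Matrix n n R) :
    B⁻¹ * B * B⁻¹ = B⁻¹ := by
  rcases nonsing_inv_cancel_or_zero B with ⟨h, -⟩ | h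
  · rw [h, Matrix.one_mul]
  · rw [h, Matrix.zero_mul, Matrix.zero_mul]

theorem one_sub_vecMulVec_one_mul_of_one_vecMul_eq_zero [Fintype n] [DecidableEq n] [Ring R]
    (p : n → R) {C : Matrix n o R} (hC : 1 ᵥ* C = 0) :
    ((1 : Matrix n n R) - vecMulVec p 1) * C = C := by
  rw [Matrix.sub_mul, Matrix.one_mul, vecMulVec_mul, hC, sub_eq_self]
  exact ext fun _ _ => mul_zero _

section Multinomial

variable [DecidableEq n] [Field R] (p : n → R)

theorem transpose_diagonal_sub_vecMulVec :
    (diagonal p - vecMulVec p p)ᵀ = diagonal p - vecMulVec p p := by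
  rw [transpose_sub, diagonal_transpose, transpose_vecMulVec]

variable [Fintype n]

theorem diagonal_sub_vecMulVec_mul_diagonal_inv (hp : ∀ i, p i ≠ 0) :
    (diagonal p - vecMulVec p p) * diagonal (fun i => (p i)⁻¹) = 1 - vecMulVec p 1 := by
  rw [Matrix.sub_mul, diagonal_mul_diagonal, vecMulVec_mul]
  congr 1
  · rw [← diagonal_one]
    exact congrArg diagonal (funext fun i => mul_inv_cancel₀ (hp i))
  · congr 1
    funext i
    rw [vecMul_diagonal, mul_inv_cancel₀ (hp i), Pi.one_apply]

theorem one_vecMul_diagonal_sub_vecMulVec (hsum : ∑ i, p i = 1) :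
    1 ᵥ* (diagonal p - vecMulVec p p) = 0 := by
  have hdot : (1 : n → R) ⬝ᵥ p = 1 := by rw [one_dotProduct, hsum]
  funext j
  rw [vecMul_sub, vecMul_vecMulVec, hdot, one_smul, Pi.sub_apply, vecMul_diagonal, Pi.one_apply,
    one_mul, sub_self, Pi.zero_apply]

end Multinomial

variable [Fintype m] [Fintype n] [DecidableEq m] [CommRing R]

/-- When `D W D′` is invertible, `weightedRowProj D W * W` is the projection onto the row space
of `D` along its `W`-orthogonal complement; otherwise the inverse, hence the matrix, is `0`. -/
noncomputable def weightedRowProj (D : Matrix m n R) (W : Matrix n n R) : Matrix n n R :=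
  Dᵀ * (D * W * Dᵀ)⁻¹ * D

variable (D : Matrix m n R) (W : Matrix n n R)

theorem weightedRowProj_mul_mul_self :
    weightedRowProj D W * W * weightedRowProj D W = weightedRowProj D W := by
  unfold weightedRowProj
  calc Dᵀ * (D * W * Dᵀ)⁻¹ * D * W * (Dᵀ * (D * W * Dᵀ)⁻¹ * D)
      = Dᵀ * ((D * W * Dᵀ)⁻¹ * (D * W * Dᵀ) * (D * W * Dᵀ)⁻¹) * D := by
        simp only [Matrix.mul_assoc]
    _ = Dᵀ * (D * W * Dᵀ)⁻¹ * D := by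
        rw [nonsing_inv_mul_mul_nonsing_inv, Matrix.mul_assoc]

theorem mul_mul_weightedRowProj {S : Matrix n n R} (hS : S * W * Dᵀ = Dᵀ) :
    S * W * weightedRowProj D W = weightedRowProj D W := by
  unfold weightedRowProj
  rw [← Matrix.mul_assoc, ← Matrix.mul_assoc, hS]

theorem weightedRowProj_mul_mul {S : Matrix n n R} (hS : D * W * S = D) :
    weightedRowProj D W * W * S = weightedRowProj D W := by
  unfold weightedRowProj
  simp only [Matrix.mul_assoc] at hS ⊢
  rw [hS]

theorem transpose_weightedRowProj (hW : Wᵀ = W) :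
    (weightedRowProj D W)ᵀ = weightedRowProj D W := by
  have hB : (D * W * Dᵀ)ᵀ = D * W * Dᵀ := by
    rw [transpose_mul, transpose_mul, hW, transpose_transpose, Matrix.mul_assoc]
  unfold weightedRowProj
  rw [transpose_mul, transpose_mul, transpose_transpose, transpose_nonsing_inv, hB,
    ← Matrix.mul_assoc]

end Matrix

theorem MSigmaMt_eq_general
    {I K : ℕ} (p : Fin I → ℝ) (hp : ∀ i, 0 < p i) (hsum : ∑ i, p i = 1)
    (D : Matrix (Fin K) (Fin I) ℝ)
    (hD1 : D *ᵥ (fun _ => (1 : ℝ)) = 0)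
    (Sig : Matrix (Fin I) (Fin I) ℝ) (hSig : Sig = diagonal p - vecMulVec p p)
    (M : Matrix (Fin I) (Fin I) ℝ)
    (hM : M = (Sig - Dᵀ * (D * diagonal (fun i => (p i)⁻¹) * Dᵀ)⁻¹ * D) *
      diagonal (fun i => (p i)⁻¹)) :
    M * Sig * Mᵀ = Sig - Dᵀ * (D * diagonal (fun i => (p i)⁻¹) * Dᵀ)⁻¹ * D := by
  set W : Matrix (Fin I) (Fin I) ℝ := diagonal (fun i => (p i)⁻¹)
  change M = (Sig - weightedRowProj D W) * W at hM
  change M * Sig * Mᵀ = Sig - weightedRowProj D W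
  have hWt : Wᵀ = W := diagonal_transpose _
  have hSigt : Sigᵀ = Sig := hSig ▸ transpose_diagonal_sub_vecMulVec p
  have hSigW : Sig * W = 1 - vecMulVec p 1 :=
    hSig ▸ diagonal_sub_vecMulVec_mul_diagonal_inv p fun i => (hp i).ne'
  have hSigWSig : Sig * W * Sig = Sig := by
    rw [hSigW]
    exact one_sub_vecMulVec_one_mul_of_one_vecMul_eq_zero p
      (hSig ▸ one_vecMul_diagonal_sub_vecMulVec p hsum)
  have hSigWD : Sig * W * Dᵀ = Dᵀ := by
    rw [hSigW]
    exact one_sub_vecMulVec_one_mul_of_one_vecMul_eq_zero p (by rwa [vecMul_transpose])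
  have hDWSig : D * W * Sig = D := by
    simpa only [transpose_mul, hWt, hSigt, transpose_transpose, Matrix.mul_assoc]
      using congrArg transpose hSigWD
  rw [hM, transpose_mul, transpose_sub, hSigt, transpose_weightedRowProj D W hWt, hWt]
  exact sub_mul_mul_mul_mul_sub_eq_sub hSigWSig (mul_mul_weightedRowProj D W hSigWD)
    (weightedRowProj_mul_mul D W hDWSig) (weightedRowProj_mul_mul_self D W)

/-- If `D𝟙 = 0`, `Σ = Δ[p] − pp′`, and `M = (Σ − D′(DΔ[p⁻¹]D′)⁻¹D) Δ[p⁻¹]`, then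
`M Σ M′ = Σ − D′(DΔ[p⁻¹]D′)⁻¹D`. -/
theorem MSigmaMt_eq
    {I K : ℕ} (p : Fin I → ℝ) (hp : ∀ i, 0 < p i) (hsum : ∑ i, p i = 1)
    (D : Matrix (Fin K) (Fin I) ℝ) (hD : D.rank = K)
    (hD1 : D *ᵥ (fun _ => (1 : ℝ)) = 0)
    (Sig : Matrix (Fin I) (Fin I) ℝ) (hSig : Sig = diagonal p - vecMulVec p p)
    (M : Matrix (Fin I) (Fin I) ℝ)
    (hM : M = (Sig - Dᵀ * (D * diagonal (fun i => (p i)⁻¹) * Dᵀ)⁻¹ * D) *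
      diagonal (fun i => (p i)⁻¹)) :
    M * Sig * Mᵀ = Sig - Dᵀ * (D * diagonal (fun i => (p i)⁻¹) * Dᵀ)⁻¹ * D :=
  MSigmaMt_eq_general p hp hsum D hD1 Sig hSig M hM
end

section
/- Let p ∈ ℝ^I be strictly positive with Σᵢ pᵢ = 1, D a K×I full-row-rank matrix, Σ₁ = I − √p(√p)′, H = (𝟙, Δ[p⁻¹]D′) of full column rank 1+K, and C = Δ[p^{1/2}] H (H′Δ[p]H)⁻¹ H′ Δ[p^{1/2}]. Then rank(C Σ₁) = K. -/
/-!
`C` is the orthogonal projection `colProj G` onto the column span of `G = Δ[√p] H`. The first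
column of `H` is `𝟙`, so `√p = G e₁` lies in that span, and `√p` is a unit vector because
`∑ pᵢ = 1`. Hence `C Σ₁ = C - √p √p′` is again idempotent, and its rank is its trace,
`(1 + K) - 1 = K`.
-/

open Matrix

namespace Matrix

variable {m n R : Type*} [Fintype m] [Fintype n]

theorem rank_eq_trace_of_isIdempotentElem [Field R] [CharZero R] [DecidableEq m]
    {A : Matrix m m R} (hA : IsIdempotentElem A) : (A.rank : R) = A.trace := by
  have hA' : IsIdempotentElem (toLin' A) := hA.map toLinAlgEquiv'
  rw [← trace_toLin'_eq, (LinearMap.IsIdempotentElem.isProj_range _ hA').trace]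
  rfl

theorem isUnit_of_rank_eq_card [Field R] [DecidableEq m] {A : Matrix m m R}
    (hA : A.rank = Fintype.card m) : IsUnit A := by
  rw [← mulVec_surjective_iff_isUnit]
  refine LinearMap.range_eq_top.mp
    (Submodule.eq_top_of_finrank_eq (S := LinearMap.range A.mulVecLin) ?_)
  rw [← rank, hA, Module.finrank_fintype_fun_eq_card]

theorem isUnit_det_transpose_mul_self_of_rank_eq_card [Field R] [LinearOrder R]
    [IsStrictOrderedRing R] [DecidableEq n] {G : Matrix m n R} (hG : G.rank = Fintype.card n) :
    IsUnit (Gᵀ * G).det :=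
  (isUnit_iff_isUnit_det _).mp <| isUnit_of_rank_eq_card <| (rank_transpose_mul_self G).trans hG

theorem isIdempotentElem_vecMulVec_self [CommRing R] {s : m → R} (hs : s ⬝ᵥ s = 1) :
    IsIdempotentElem (vecMulVec s s) := by
  rw [IsIdempotentElem, vecMulVec_mul_vecMulVec, hs, one_smul]

section colProj

variable [CommRing R] [DecidableEq n]

noncomputable def colProj (G : Matrix m n R) : Matrix m m R := G * (Gᵀ * G)⁻¹ * Gᵀ

variable {G : Matrix m n R}

theorem transpose_colProj (G : Matrix m n R) : (colProj G)ᵀ = colProj G := by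
  simp only [colProj, transpose_mul, transpose_transpose, transpose_nonsing_inv, Matrix.mul_assoc]

theorem colProj_mul_self (hG : IsUnit (Gᵀ * G).det) : colProj G * G = G := by
  rw [colProj, Matrix.mul_assoc, Matrix.mul_assoc, nonsing_inv_mul _ hG, Matrix.mul_one]

theorem colProj_mulVec_mulVec (hG : IsUnit (Gᵀ * G).det) (v : n → R) :
    colProj G *ᵥ (G *ᵥ v) = G *ᵥ v := by
  rw [mulVec_mulVec, colProj_mul_self hG]

theorem isIdempotentElem_colProj (hG : IsUnit (Gᵀ * G).det) : IsIdempotentElem (colProj G) := by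
  change colProj G * (G * _ * Gᵀ) = _
  rw [← Matrix.mul_assoc, ← Matrix.mul_assoc, colProj_mul_self hG, colProj]

theorem trace_colProj (hG : IsUnit (Gᵀ * G).det) : (colProj G).trace = Fintype.card n := by
  rw [colProj, Matrix.mul_assoc, trace_mul_comm, Matrix.mul_assoc, nonsing_inv_mul _ hG, trace_one]

variable {s : m → R}

theorem colProj_mul_vecMulVec_self (hs : colProj G *ᵥ s = s) :
    colProj G * vecMulVec s s = vecMulVec s s := by
  rw [mul_vecMulVec, hs]

theorem vecMulVec_self_mul_colProj (hs : colProj G *ᵥ s = s) :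
    vecMulVec s s * colProj G = vecMulVec s s := by
  rw [vecMulVec_mul, ← mulVec_transpose, transpose_colProj, hs]

end colProj

theorem rank_colProj_mul_one_sub_vecMulVec_self_add_one [Field R] [CharZero R] [DecidableEq m]
    [DecidableEq n] {G : Matrix m n R} (hG : IsUnit (Gᵀ * G).det) {s : m → R}
    (hs : s ⬝ᵥ s = 1) (hGs : colProj G *ᵥ s = s) :
    (colProj G * (1 - vecMulVec s s)).rank + 1 = Fintype.card n := by
  have hidem : IsIdempotentElem (colProj G - vecMulVec s s) :=
    (isIdempotentElem_vecMulVec_self hs).sub (isIdempotentElem_colProj hG)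
      (vecMulVec_self_mul_colProj hGs) (colProj_mul_vecMulVec_self hGs)
  have htrace := rank_eq_trace_of_isIdempotentElem hidem
  rw [trace_sub, trace_colProj hG, trace_vecMulVec, hs, eq_sub_iff_add_eq] at htrace
  rw [Matrix.mul_sub, Matrix.mul_one, colProj_mul_vecMulVec_self hGs]
  exact_mod_cast htrace

end Matrix

theorem rank_CSigma_eq_K_general
    {I K : ℕ} (p : Fin I → ℝ) (hp : ∀ i, 0 < p i) (hsum : ∑ i, p i = 1)
    (D : Matrix (Fin K) (Fin I) ℝ)
    (H : Matrix (Fin I) (Unit ⊕ Fin K) ℝ)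
    (hH : H = fromCols (Matrix.of fun _ (_ : Unit) => (1 : ℝ))
      (diagonal (fun i => (p i)⁻¹) * Dᵀ))
    (hHrank : H.rank = 1 + K)
    (Sig1 : Matrix (Fin I) (Fin I) ℝ)
    (hSig1 : Sig1 = 1 - vecMulVec (fun i => Real.sqrt (p i)) (fun i => Real.sqrt (p i)))
    (C : Matrix (Fin I) (Fin I) ℝ)
    (hC : C = diagonal (fun i => Real.sqrt (p i)) * H * (Hᵀ * diagonal p * H)⁻¹ * Hᵀ *
      diagonal (fun i => Real.sqrt (p i))) :
    (C * Sig1).rank = K := by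
  set s : Fin I → ℝ := fun i => Real.sqrt (p i)
  have hss : ∀ i, s i * s i = p i := fun i => Real.mul_self_sqrt (hp i).le
  set G := diagonal s * H
  have hCG : C = colProj G := by
    rw [hC, colProj, transpose_mul, diagonal_transpose, ← funext hss, ← diagonal_mul_diagonal]
    simp only [G, Matrix.mul_assoc]
  have hGrank : G.rank = Fintype.card (Unit ⊕ Fin K) := by
    have hdet : IsUnit (diagonal s).det := by
      rw [det_diagonal]
      exact (Finset.prod_pos fun i _ => Real.sqrt_pos.mpr (hp i)).ne'.isUnit
    rw [rank_mul_eq_right_of_isUnit_det _ _ hdet, hHrank]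
    simp
  have hG := isUnit_det_transpose_mul_self_of_rank_eq_card hGrank
  have hs : s ⬝ᵥ s = 1 := by simpa only [dotProduct, hss] using hsum
  have hGs : G *ᵥ Pi.single (Sum.inl ()) 1 = s := by
    ext i
    simp [G, hH, s]
  have hrank := rank_colProj_mul_one_sub_vecMulVec_self_add_one hG hs
    (hGs ▸ colProj_mulVec_mulVec hG _)
  rw [hSig1, hCG]
  simp only [Fintype.card_sum, Fintype.card_unit, Fintype.card_fin] at hrank
  omega

/-- With `Σ₁ = I − √p(√p)′` and `C = Δ[√p] H (H′Δ[p]H)⁻¹ H′ Δ[√p]`, one has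
`rank(C Σ₁) = K`. -/
theorem rank_CSigma_eq_K
    {I K : ℕ} (p : Fin I → ℝ) (hp : ∀ i, 0 < p i) (hsum : ∑ i, p i = 1)
    (D : Matrix (Fin K) (Fin I) ℝ) (hD : D.rank = K)
    (H : Matrix (Fin I) (Unit ⊕ Fin K) ℝ)
    (hH : H = fromCols (Matrix.of fun _ (_ : Unit) => (1 : ℝ))
      (diagonal (fun i => (p i)⁻¹) * Dᵀ))
    (hHrank : H.rank = 1 + K)
    (Sig1 : Matrix (Fin I) (Fin I) ℝ)
    (hSig1 : Sig1 = 1 - vecMulVec (fun i => Real.sqrt (p i)) (fun i => Real.sqrt (p i)))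
    (C : Matrix (Fin I) (Fin I) ℝ)
    (hC : C = diagonal (fun i => Real.sqrt (p i)) * H * (Hᵀ * diagonal p * H)⁻¹ * Hᵀ *
      diagonal (fun i => Real.sqrt (p i))) :
    (C * Sig1).rank = K :=
  rank_CSigma_eq_K_general p hp hsum D H hH hHrank Sig1 hSig1 C hC
end

section
/- Let (λ_n) be a sequence of positive reals with λ_n → ∞, and let (t_n) be a sequence of nonnegative reals with (t_n/λ_n − 1) = O(λ_n^{-1/2}). Then the one-dimensional Bregman statistic B(t_n, λ_n) = 2(t_n log(t_n/λ_n) − (t_n − λ_n)) and the one-dimensional Pearson statistic X²(t_n, λ_n) = (t_n − λ_n)²/λ_n satisfy B(t_n, λ_n) − X²(t_n, λ_n) → 0 as n → ∞. -/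
open Filter Asymptotics
open scoped Topology

/-!
Writing `u = t / λ - 1`, the difference `B - X²` is `λ · g(u)` with
`g(u) = 2((1 + u) log(1 + u) - u) - u²`. Since `g(0) = 0` and `g'(u) = 2(log(1 + u) - u) = O(u²)`,
the mean value inequality gives `g(u) = O(u³)`. The hypothesis makes `u_n = O(λ_n^{-1/2})`, so
`λ_n g(u_n) = O(λ_n · λ_n^{-3/2}) = O(λ_n^{-1/2}) → 0`.
-/

open Real Metric

lemma abs_log_one_add_sub_self_le {x : ℝ} (hx : |x| ≤ 1 / 2) :
    |log (1 + x) - x| ≤ 2 * x ^ 2 := by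
  have h := abs_log_sub_add_sum_range_le (x := -x) (by rw [abs_neg]; linarith) 1
  simp only [Finset.sum_range_one, abs_neg, sub_neg_eq_add] at h
  norm_num at h
  calc |log (1 + x) - x| = |-x + log (1 + x)| := by ring_nf
    _ ≤ x ^ 2 / (1 - |x|) := h
    _ ≤ 2 * x ^ 2 := by
      rw [div_le_iff₀ (by linarith)]
      nlinarith [sq_nonneg x]

noncomputable def bregmanPearsonGap (u : ℝ) : ℝ :=
  2 * ((1 + u) * log (1 + u) - u) - u ^ 2

lemma hasDerivAt_bregmanPearsonGap {u : ℝ} (hu : 1 + u ≠ 0) :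
    HasDerivAt bregmanPearsonGap (2 * (log (1 + u) - u)) u := by
  have hmul : HasDerivAt (fun u => (1 + u) * log (1 + u)) (log (1 + u) + 1) u := by
    have h := (hasDerivAt_mul_log hu).comp u ((hasDerivAt_id' u).const_add 1)
    rwa [mul_one] at h
  have h := ((hmul.sub (hasDerivAt_id' u)).const_mul 2).sub (hasDerivAt_pow 2 u)
  exact h.congr_deriv (by norm_num; ring)

lemma abs_bregmanPearsonGap_le {x : ℝ} (hx : |x| ≤ 1 / 2) :
    |bregmanPearsonGap x| ≤ 4 * |x| ^ 3 := by
  have hball : ∀ y ∈ closedBall (0 : ℝ) |x|, |y| ≤ 1 / 2 := fun y hy =>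
    (mem_closedBall_zero_iff.1 hy).trans hx
  have hderiv : ∀ y ∈ closedBall (0 : ℝ) |x|,
      HasDerivWithinAt bregmanPearsonGap (2 * (log (1 + y) - y)) (closedBall 0 |x|) y :=
    fun y hy => (hasDerivAt_bregmanPearsonGap (by linarith [neg_abs_le y, hball y hy]))
      |>.hasDerivWithinAt
  have hbound : ∀ y ∈ closedBall (0 : ℝ) |x|, ‖2 * (log (1 + y) - y)‖ ≤ 4 * x ^ 2 := by
    intro y hy
    have hyx : y ^ 2 ≤ x ^ 2 := sq_le_sq.2 (mem_closedBall_zero_iff.1 hy)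
    rw [norm_mul, Real.norm_eq_abs, Real.norm_eq_abs, abs_two]
    linarith [abs_log_one_add_sub_self_le (hball y hy)]
  have hmvt := (convex_closedBall (0 : ℝ) |x|).norm_image_sub_le_of_norm_hasDerivWithin_le
    hderiv hbound (mem_closedBall_self (abs_nonneg x)) (mem_closedBall_zero_iff.2 le_rfl)
  calc |bregmanPearsonGap x| = ‖bregmanPearsonGap x - bregmanPearsonGap 0‖ := by
        simp [bregmanPearsonGap]
    _ ≤ 4 * x ^ 2 * ‖x - 0‖ := hmvt
    _ = 4 * |x| ^ 3 := by rw [sub_zero, Real.norm_eq_abs, ← sq_abs]; ring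

lemma bregmanPearsonGap_isBigO : bregmanPearsonGap =O[𝓝 0] fun u => u ^ 3 := by
  refine IsBigO.of_bound 4 ?_
  filter_upwards [closedBall_mem_nhds (0 : ℝ) (by norm_num : (0 : ℝ) < 1 / 2)] with x hx
  simpa using abs_bregmanPearsonGap_le (mem_closedBall_zero_iff.1 hx)

lemma bregman_sub_pearson_eq {t l : ℝ} (hl : l ≠ 0) :
    2 * (t * log (t / l) - (t - l)) - (t - l) ^ 2 / l = l * bregmanPearsonGap (t / l - 1) := by
  simp only [bregmanPearsonGap, add_sub_cancel]
  field_simp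

theorem bregman_pearson_equiv_general
    (lam t : ℕ → ℝ)
    (hlim : Tendsto lam atTop atTop)
    (hO : (fun n => t n / lam n - 1) =O[atTop] fun n => (Real.sqrt (lam n))⁻¹) :
    Tendsto (fun n => 2 * (t n * Real.log (t n / lam n) - (t n - lam n)) -
      (t n - lam n) ^ 2 / lam n) atTop (𝓝 0) := by
  have hlam_pos : ∀ᶠ n in atTop, 0 < lam n := hlim.eventually_gt_atTop 0
  have hsqrt : Tendsto (fun n => (√(lam n))⁻¹) atTop (𝓝 0) :=
    (tendsto_sqrt_atTop.comp hlim).inv_tendsto_atTop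
  have hgap : (fun n => bregmanPearsonGap (t n / lam n - 1)) =O[atTop]
      fun n => (√(lam n))⁻¹ ^ 3 :=
    (bregmanPearsonGap_isBigO.comp_tendsto (hO.trans_tendsto hsqrt)).trans (hO.pow 3)
  have hscale : (fun n => lam n * (√(lam n))⁻¹ ^ 3) =ᶠ[atTop] fun n => (√(lam n))⁻¹ := by
    filter_upwards [hlam_pos] with n hn
    have hs := sqrt_pos.2 hn
    field_simp
    rw [sq_sqrt hn.le]
  have hdiff : (fun n => 2 * (t n * log (t n / lam n) - (t n - lam n)) - (t n - lam n) ^ 2 / lam n)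
      =ᶠ[atTop] fun n => lam n * bregmanPearsonGap (t n / lam n - 1) := by
    filter_upwards [hlam_pos] with n hn
    exact bregman_sub_pearson_eq hn.ne'
  exact (((isBigO_refl lam atTop).mul hgap).congr' hdiff.symm hscale).trans_tendsto hsqrt

/-- If `λ_n → ∞`, `t_n ≥ 0`, and `t_n/λ_n − 1 = O(λ_n^{-1/2})`, then the Bregman statistic
`B(t_n, λ_n) = 2(t_n log(t_n/λ_n) − (t_n − λ_n))` and the Pearson statistic
`X²(t_n, λ_n) = (t_n − λ_n)²/λ_n` satisfy `B − X² → 0`. -/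
theorem bregman_pearson_equiv
    (lam t : ℕ → ℝ) (hlam : ∀ n, 0 < lam n) (ht : ∀ n, 0 ≤ t n)
    (hlim : Tendsto lam atTop atTop)
    (hO : (fun n => t n / lam n - 1) =O[atTop] fun n => (Real.sqrt (lam n))⁻¹) :
    Tendsto (fun n => 2 * (t n * Real.log (t n / lam n) - (t n - lam n)) -
      (t n - lam n) ^ 2 / lam n) atTop (𝓝 0) :=
  bregman_pearson_equiv_general lam t hlim hO
end
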